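/- arXiv:1606.07288 — 3 statements merged into one kernel-verified Lean document; each statement's English description precedes it below -/
import Mathlib

section
/- Let S = (P, L, I) be a generalized 2d-gon, let j with 2 ≤ j ≤ d be even, and let O be a set of points. Then O is a distance-j ovoid of S if and only if for every line ℓ there is exactly one point x ∈ O with d(x, ℓ) ≤ (j − 2)/2. -/
open SimpleGraph
section Geometry

variable {P L : Type*}

/-- The adjacency relation of the incidence graph of a point-line geometry. -/
def IncAdj (I : P → L → Prop) : P ⊕ L → P ⊕ L → Prop
  | Sum.inl p, Sum.inr l => I p l
  | Sum.inr l, Sum.inl p => I p l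
  | _, _ => False

/-- The incidence graph of a point-line geometry: vertices are points and lines,
a point is adjacent to a line iff they are incident. -/
def incidenceGraph (I : P → L → Prop) : SimpleGraph (P ⊕ L) where
  Adj := IncAdj I
  symm := ⟨by intro a b h; cases a <;> cases b <;> simp_all [IncAdj]⟩
  loopless := ⟨by intro a h; cases a <;> simp_all [IncAdj]⟩

/-- The point graph of a point-line geometry: distinct points are adjacent iff they
are incident with a common line. -/
def pointGraph (I : P → L → Prop) : SimpleGraph P where
  Adj x y := x ≠ y ∧ ∃ l, I x l ∧ I y l
  symm := ⟨by rintro x y ⟨h, l, hx, hy⟩; exact ⟨h.symm, l, hy, hx⟩⟩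
  loopless := ⟨by rintro x ⟨h, -⟩; exact h rfl⟩

/-- Distance from a point to a line: the minimum point-graph distance from `x`
to a point incident with `l`. -/
noncomputable def distPL (I : P → L → Prop) (x : P) (l : L) : ℕ :=
  sInf ((pointGraph I).dist x '' {y | I y l})

/-- Distance between two lines: the minimum point-graph distance between a point of `l`
and a point of `l'`. -/
noncomputable def distLL (I : P → L → Prop) (l l' : L) : ℕ :=
  sInf {n | ∃ x y, I x l ∧ I y l' ∧ (pointGraph I).dist x y = n}

/-- A generalized `n`-gon of order `(s, t)`: every line has `s + 1` points, every point is
on `t + 1` lines, and the incidence graph has diameter `n` and girth `2 * n`. -/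
structure IsGenPolygon (I : P → L → Prop) (n s t : ℕ) : Prop where
  pts_nonempty : Nonempty P
  line_card : ∀ l : L, {p : P | I p l}.ncard = s + 1
  point_card : ∀ p : P, {l : L | I p l}.ncard = t + 1
  ediam_eq : (incidenceGraph I).ediam = n
  egirth_eq : (incidenceGraph I).egirth = 2 * n

/-- A subhexagon of order `(s, t')` of a generalized hexagon. -/
def IsSubhexagon (I : P → L → Prop) (s t' : ℕ) (P' : Set P) (L' : Set L) : Prop :=
  (∀ p : P, ∀ l ∈ L', I p l → p ∈ P') ∧
  IsGenPolygon (fun (p : P') (l : L') => I p.1 l.1) 6 s t'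

/-- A distance-`j` ovoid of a generalized `2d`-gon (in terms of the point graph). -/
def IsDistanceOvoid (I : P → L → Prop) (j : ℕ) (O : Set P) : Prop :=
  (∀ x ∈ O, ∀ y ∈ O, x ≠ y → j ≤ (pointGraph I).dist x y) ∧
  (∀ a : P, ∃ x ∈ O, 2 * (pointGraph I).dist a x ≤ j) ∧
  (∀ l : L, ∃ x ∈ O, 2 * distPL I x l ≤ j - 1)

end Geometry

/-!
Write `j = 2k + 2`. Two points at distance at most `k` from a common line `l` are at distance
at most `2k + 1 < j`, since any two points of `l` are collinear. Conversely, if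
`1 ≤ d(x, y) ≤ 2k + 1`, the line carrying a suitable edge of a geodesic from `x` to `y` is at
distance at most `k` from both. Hence `j`-separation of `O` is exactly uniqueness of the point
of `O` near each line; and if `x ∈ O` is near a line through `a`, then `d(a, x) ≤ k + 1 = j / 2`.
-/

section PointLineGeometry

open SimpleGraph

variable {P L : Type*} {I : P → L → Prop}

@[simp] lemma incidenceGraph_adj_inl_inr {x : P} {l : L} :
    (incidenceGraph I).Adj (.inl x) (.inr l) ↔ I x l := Iff.rfl

@[simp] lemma not_incidenceGraph_adj_inl_inl {x y : P} :
    ¬(incidenceGraph I).Adj (.inl x) (.inl y) := id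

@[simp] lemma not_incidenceGraph_adj_inr_inr {l m : L} :
    ¬(incidenceGraph I).Adj (.inr l) (.inr m) := id

lemma pointGraph_reachable_of_incident {x y : P} {l : L} (hx : I x l) (hy : I y l) :
    (pointGraph I).Reachable x y := by
  by_cases hxy : x = y
  · exact hxy ▸ .refl x
  · exact Adj.reachable ⟨hxy, l, hx, hy⟩

lemma pointGraph_dist_le_one_of_incident {x y : P} {l : L} (hx : I x l) (hy : I y l) :
    (pointGraph I).dist x y ≤ 1 := by
  by_cases hxy : x = y
  · simp [hxy]
  · exact (dist_eq_one_iff_adj.mpr (show (pointGraph I).Adj x y from ⟨hxy, l, hx, hy⟩)).le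

/-- A walk in the incidence graph between vertices "at" `x` and `y` (the point itself, or a
line through it) is shadowed by a path in the point graph. -/
lemma pointGraph_reachable_of_walk {v w : P ⊕ L} (p : (incidenceGraph I).Walk v w) {x y : P}
    (hx : .inl x = v ∨ (incidenceGraph I).Adj (.inl x) v)
    (hy : .inl y = w ∨ (incidenceGraph I).Adj (.inl y) w) :
    (pointGraph I).Reachable x y := by
  induction p generalizing x with
  | @nil v =>
    rcases v with a | l
    · simp only [Sum.inl.injEq, not_incidenceGraph_adj_inl_inl, or_false] at hx hy
      exact hx ▸ hy ▸ .refl _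
    · simp only [reduceCtorEq, incidenceGraph_adj_inl_inr, false_or] at hx hy
      exact pointGraph_reachable_of_incident hx hy
  | @cons v u w h p ih =>
    rcases v with a | l <;> rcases u with b | m
    · exact absurd h not_incidenceGraph_adj_inl_inl
    · simp only [Sum.inl.injEq, not_incidenceGraph_adj_inl_inl, or_false] at hx
      subst hx
      exact ih (Or.inr h) hy
    · simp only [reduceCtorEq, incidenceGraph_adj_inl_inr, false_or] at hx
      exact (pointGraph_reachable_of_incident hx h).trans (ih (Or.inl rfl) hy)
    · exact absurd h not_incidenceGraph_adj_inr_inr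

lemma pointGraph_preconnected (h : (incidenceGraph I).Preconnected) :
    (pointGraph I).Preconnected := fun x y ↦
  let ⟨p⟩ := h (.inl x) (.inl y)
  pointGraph_reachable_of_walk p (.inl rfl) (.inl rfl)

lemma IsGenPolygon.pointGraph_connected {n s t : ℕ} (h : IsGenPolygon I n s t) :
    (pointGraph I).Connected :=
  have := h.pts_nonempty
  ⟨pointGraph_preconnected <| preconnected_of_ediam_ne_top <| h.ediam_eq ▸ ENat.natCast_ne_top n⟩

lemma IsGenPolygon.exists_incident_point {n s t : ℕ} (h : IsGenPolygon I n s t) (l : L) :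
    ∃ x, I x l :=
  Set.nonempty_of_ncard_ne_zero (s := {x | I x l}) (by rw [h.line_card]; omega)

lemma IsGenPolygon.exists_incident_line {n s t : ℕ} (h : IsGenPolygon I n s t) (x : P) :
    ∃ l, I x l :=
  Set.nonempty_of_ncard_ne_zero (s := {l | I x l}) (by rw [h.point_card]; omega)

lemma distPL_le_dist {x p : P} {l : L} (hp : I p l) :
    distPL I x l ≤ (pointGraph I).dist x p :=
  Nat.sInf_le ⟨p, hp, rfl⟩

lemma exists_dist_eq_distPL (x : P) {l : L} (hl : ∃ p, I p l) :
    ∃ p, I p l ∧ (pointGraph I).dist x p = distPL I x l :=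
  Nat.sInf_mem (Set.Nonempty.image _ hl)

lemma dist_le_distPL_add_one (hconn : (pointGraph I).Connected) {a x : P} {l : L}
    (ha : I a l) : (pointGraph I).dist a x ≤ distPL I x l + 1 := by
  obtain ⟨p, hp, hxp⟩ := exists_dist_eq_distPL x ⟨a, ha⟩
  calc (pointGraph I).dist a x
      ≤ (pointGraph I).dist a p + (pointGraph I).dist p x := hconn.dist_triangle
    _ ≤ 1 + distPL I x l := by
      rw [dist_comm (u := p), hxp]; gcongr; exact pointGraph_dist_le_one_of_incident ha hp
    _ = distPL I x l + 1 := add_comm _ _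

lemma dist_le_distPL_add_distPL_add_one (hconn : (pointGraph I).Connected) (x y : P) {l : L}
    (hl : ∃ p, I p l) : (pointGraph I).dist x y ≤ distPL I x l + distPL I y l + 1 := by
  obtain ⟨q, hq, hyq⟩ := exists_dist_eq_distPL y hl
  calc (pointGraph I).dist x y
      ≤ (pointGraph I).dist x q + (pointGraph I).dist q y := hconn.dist_triangle
    _ ≤ distPL I x l + 1 + distPL I y l := by
      rw [dist_comm (u := q), hyq, dist_comm]
      gcongr
      exact dist_le_distPL_add_one hconn hq
    _ = distPL I x l + distPL I y l + 1 := by ring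

/-- The line carrying a suitable edge of a geodesic from `x` to `y` is close to both ends. -/
lemma exists_distPL_le_of_dist_le {x y : P} (hxy : (pointGraph I).Reachable x y) (hne : x ≠ y)
    {a b : ℕ} (h : (pointGraph I).dist x y ≤ a + b + 1) :
    ∃ l, distPL I x l ≤ a ∧ distPL I y l ≤ b := by
  obtain ⟨w, hw⟩ := hxy.exists_walk_length_eq_dist
  have hpos := hxy.pos_dist_of_ne hne
  set i := min a (w.length - 1)
  obtain ⟨-, l, hil, hil'⟩ := w.adj_getVert_succ (i := i) (by omega)
  refine ⟨l, ?_, ?_⟩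
  · calc distPL I x l ≤ (pointGraph I).dist x (w.getVert i) := distPL_le_dist hil
      _ ≤ (w.take i).length := dist_le _
      _ ≤ a := by rw [Walk.take_length]; omega
  · calc distPL I y l ≤ (pointGraph I).dist y (w.getVert (i + 1)) := distPL_le_dist hil'
      _ = (pointGraph I).dist (w.getVert (i + 1)) y := dist_comm
      _ ≤ (w.drop (i + 1)).length := dist_le _
      _ ≤ b := by rw [Walk.drop_length]; omega

variable {O : Set P} {k : ℕ}

lemma IsDistanceOvoid.existsUnique_distPL_le (hconn : (pointGraph I).Connected)
    (hline : ∀ l, ∃ p, I p l) (hO : IsDistanceOvoid I (2 * k + 2) O) (l : L) :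
    ∃! x, x ∈ O ∧ distPL I x l ≤ k := by
  obtain ⟨hsep, -, hcover⟩ := hO
  obtain ⟨x, hxO, hxl⟩ := hcover l
  refine ⟨x, ⟨hxO, by omega⟩, fun y ⟨hyO, hyl⟩ ↦ ?_⟩
  by_contra hyx
  have hfar := hsep y hyO x hxO hyx
  have hnear := dist_le_distPL_add_distPL_add_one hconn y x (hline l)
  omega

lemma isDistanceOvoid_of_existsUnique_distPL_le (hconn : (pointGraph I).Connected)
    (hpoint : ∀ x, ∃ l, I x l) (h : ∀ l, ∃! x, x ∈ O ∧ distPL I x l ≤ k) :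
    IsDistanceOvoid I (2 * k + 2) O := by
  refine ⟨fun x hx y hy hne ↦ ?_, fun a ↦ ?_, fun l ↦ ?_⟩
  · by_contra! hclose
    obtain ⟨l, hxl, hyl⟩ := exists_distPL_le_of_dist_le (hconn x y) hne (a := k) (b := k)
      (by omega)
    exact hne ((h l).unique ⟨hx, hxl⟩ ⟨hy, hyl⟩)
  · obtain ⟨l, hal⟩ := hpoint a
    obtain ⟨x, ⟨hxO, hxl⟩, -⟩ := h l
    have := dist_le_distPL_add_one hconn hal (x := x)
    exact ⟨x, hxO, by omega⟩
  · obtain ⟨x, ⟨hxO, hxl⟩, -⟩ := h l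
    exact ⟨x, hxO, by omega⟩

end PointLineGeometry

theorem distance_ovoid_iff_exact_cover_even_general {P L : Type*} {I : P → L → Prop}
    {d j s t : ℕ} (hpoly : IsGenPolygon I (2 * d) s t)
    (hj2 : 2 ≤ j) (hje : Even j) (O : Set P) :
    IsDistanceOvoid I j O ↔
      ∀ l : L, ∃! x : P, x ∈ O ∧ distPL I x l ≤ (j - 2) / 2 := by
  obtain ⟨k, rfl⟩ : ∃ k, j = 2 * k + 2 := ⟨(j - 2) / 2, by obtain ⟨r, rfl⟩ := hje; omega⟩
  rw [show (2 * k + 2 - 2) / 2 = k by omega]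
  have hconn := hpoly.pointGraph_connected
  exact ⟨fun hO l ↦ hO.existsUnique_distPL_le hconn hpoly.exists_incident_point l,
    isDistanceOvoid_of_existsUnique_distPL_le hconn hpoly.exists_incident_line⟩

/-- For even `j`, a set `O` of points of a generalized `2d`-gon is a distance-`j` ovoid
iff every line is at point-graph distance at most `(j-2)/2` from exactly one point of `O`. -/
theorem distance_ovoid_iff_exact_cover_even {P L : Type*} {I : P → L → Prop}
    {d j s t : ℕ} (hs : 1 ≤ s) (ht : 1 ≤ t) (hpoly : IsGenPolygon I (2 * d) s t)
    (hj2 : 2 ≤ j) (hjd : j ≤ d) (hje : Even j) (O : Set P) :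
    IsDistanceOvoid I j O ↔
      ∀ l : L, ∃! x : P, x ∈ O ∧ distPL I x l ≤ (j - 2) / 2 :=
  distance_ovoid_iff_exact_cover_even_general hpoly hj2 hje O
end

section
/- A finite generalized hexagon of order (s,t), with s, t ≥ 1, has exactly (1 + s)(1 + st + s²t²) points. -/
/-! Fix a point `p` and sort the vertices of the incidence graph by their distance `k ≤ 6`
from `p`. As the girth is `12`, each vertex at distance `1 ≤ k ≤ 5` has a unique neighbour at
distance `k - 1`, and the graph is bipartite, so its remaining neighbours lie at distance
`k + 1`: the layer sizes are `1, t + 1, (t + 1)s, (t + 1)st, (t + 1)s²t, (t + 1)s²t²`, and the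
last layer, whose points have all their `t + 1` lines at distance `5`, has `s³t²` elements.
The points are the vertices at even distance, so there are `1 + (t + 1)s + (t + 1)s²t + s³t²`
of them. -/

open SimpleGraph
namespace SimpleGraph

variable {V : Type*} {G : SimpleGraph V}

theorem Walk.IsPath.eq_of_length_add_length_lt_egirth {u v : V} {p q : G.Walk u v}
    (hp : p.IsPath) (hq : q.IsPath) (hlt : ((p.length + q.length : ℕ) : ℕ∞) < G.egirth) :
    p = q := by
  set H : SimpleGraph V := fromEdgeSet {e | e ∈ p.edges ∨ e ∈ q.edges}
  have hmemH {e : Sym2 V} (he : e ∈ p.edges ∨ e ∈ q.edges) : e ∈ H.edgeSet := by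
    rw [edgeSet_fromEdgeSet]
    refine ⟨he, G.not_isDiag_of_mem_edgeSet ?_⟩
    exact he.elim (fun h => p.edges_subset_edgeSet h) (fun h => q.edges_subset_edgeSet h)
  have hHG : H ≤ G := (fromEdgeSet_le G).mpr fun e ⟨he, _⟩ =>
    he.elim (fun h => p.edges_subset_edgeSet h) (fun h => q.edges_subset_edgeSet h)
  -- A cycle of `H` uses distinct edges of `p` and `q`, so it is too short to exist in `G`.
  have hH : H.IsAcyclic := by
    intro w c hc
    have hsub : c.edges ⊆ p.edges ++ q.edges := fun e he => by
      have := c.edges_subset_edgeSet he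
      rw [edgeSet_fromEdgeSet] at this
      exact List.mem_append.mpr this.1
    have hlen : c.length ≤ p.length + q.length := by
      simpa using (hc.edges_nodup.subperm hsub).length_le
    have hgc := egirth_le_length (hc.mapLe hHG)
    rw [Walk.length_mapLe] at hgc
    exact (hgc.trans (by exact_mod_cast hlen)).not_gt hlt
  have hpq := (hH.subsingleton_path u v).elim ⟨p.transfer H fun e he => hmemH (.inl he),
    hp.transfer _⟩ ⟨q.transfer H fun e he => hmemH (.inr he), hq.transfer _⟩
  have := congrArg (fun r : H.Path u v => (r : H.Walk u v).transfer G
    fun e he => edgeSet_mono hHG (r.1.edges_subset_edgeSet he)) hpq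
  simpa [Walk.transfer_transfer, Walk.transfer_self] using this

theorem Connected.exists_adj_dist_eq_of_dist_eq_succ (hG : G.Connected) {r v : V} {k : ℕ}
    (hv : G.dist r v = k + 1) : ∃ u, G.Adj u v ∧ G.dist r u = k := by
  obtain ⟨p, hp⟩ := hG.exists_walk_length_eq_dist v r
  rw [dist_comm, hv] at hp
  cases p with
  | nil => simp at hp
  | @cons _ u _ hvu q =>
    refine ⟨u, hvu.symm, le_antisymm ?_ ?_⟩
    · have hq : q.length = k := by simpa using hp
      simpa [hq] using dist_le q.reverse
    · have := hG.dist_triangle (u := r) (v := u) (w := v)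
      rw [hv, dist_eq_one_iff_adj.mpr hvu.symm] at this
      omega

theorem Connected.eq_of_adj_of_dist_eq_succ (hG : G.Connected) {r u₁ u₂ v : V}
    (h₁ : G.Adj u₁ v) (h₂ : G.Adj u₂ v) (hd₁ : G.dist r v = G.dist r u₁ + 1)
    (hd₂ : G.dist r v = G.dist r u₂ + 1) (hg : ((2 * G.dist r v : ℕ) : ℕ∞) < G.egirth) :
    u₁ = u₂ := by
  classical
  have geodesic_concat {u : V} (h : G.Adj u v) (hd : G.dist r v = G.dist r u + 1) :
      ∃ p : G.Walk r u, (p.concat h).IsPath ∧ (p.concat h).length = G.dist r v := by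
    obtain ⟨p, hp, hlen⟩ := hG.exists_path_of_dist r u
    refine ⟨p, hp.concat (fun hv => ?_) h, by simp [hlen, hd]⟩
    have := dist_le (p.takeUntil v hv)
    have := p.length_takeUntil_le_length hv
    omega
  obtain ⟨p₁, hp₁, hl₁⟩ := geodesic_concat h₁ hd₁
  obtain ⟨p₂, hp₂, hl₂⟩ := geodesic_concat h₂ hd₂
  have hlt : (((p₁.concat h₁).length + (p₂.concat h₂).length : ℕ) : ℕ∞) < G.egirth := by
    rwa [hl₁, hl₂, ← two_mul]
  exact (Walk.concat_inj (hp₁.eq_of_length_add_length_lt_egirth hp₂ hlt)).1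

theorem Coloring.even_dist_iff (c : G.Coloring Bool) {u v : V} (h : G.Reachable u v) :
    Even (G.dist u v) ↔ (c u ↔ c v) := by
  obtain ⟨p, hp⟩ := h.exists_walk_length_eq_dist
  rw [← hp, c.even_length_iff_congr]

theorem Coloring.dist_ne_of_adj (c : G.Coloring Bool) (hG : G.Connected) {r u w : V}
    (h : G.Adj u w) : G.dist r u ≠ G.dist r w := by
  intro hd
  have hu := c.even_dist_iff (hG r u)
  have hw := c.even_dist_iff (hG r w)
  have huw := c.valid h
  rw [hd] at hu
  cases hcu : c u <;> cases hcw : c w <;> simp_all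

theorem Coloring.dist_eq_succ_or_of_adj (c : G.Coloring Bool) (hG : G.Connected) {r u w : V}
    (h : G.Adj u w) : G.dist r w = G.dist r u + 1 ∨ G.dist r u = G.dist r w + 1 := by
  have := c.dist_ne_of_adj hG (r := r) h
  rcases h.diff_dist_adj (u := r) with h' | h' | h' <;> omega

section Layers

variable [Fintype V]

noncomputable def distLayer (G : SimpleGraph V) (r : V) (k : ℕ) : Finset V :=
  {v | G.dist r v = k}

@[simp]
theorem mem_distLayer {r v : V} {k : ℕ} : v ∈ G.distLayer r k ↔ G.dist r v = k := by
  simp [distLayer]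

theorem Connected.distLayer_zero (hG : G.Connected) (r : V) : G.distLayer r 0 = {r} := by
  ext v
  simp [hG.dist_eq_zero_iff, eq_comm]

variable [DecidableRel G.Adj]

theorem distLayer_one (r : V) : G.distLayer r 1 = G.neighborFinset r := by
  ext v
  simp

theorem Connected.card_bipartiteBelow_distLayer (hG : G.Connected) {r v : V} {k : ℕ}
    (hv : v ∈ G.distLayer r (k + 1)) (hg : ((2 * (k + 1) : ℕ) : ℕ∞) < G.egirth) :
    ((G.distLayer r k).bipartiteBelow G.Adj v).card = 1 := by
  rw [mem_distLayer] at hv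
  obtain ⟨u, hu, hdu⟩ := hG.exists_adj_dist_eq_of_dist_eq_succ hv
  rw [Finset.card_eq_one]
  refine ⟨u, Finset.eq_singleton_iff_unique_mem.mpr ⟨by simp [hu, hdu], fun u' hu' => ?_⟩⟩
  simp only [Finset.mem_bipartiteBelow, mem_distLayer] at hu'
  exact hG.eq_of_adj_of_dist_eq_succ (r := r) hu'.2 hu (by omega) (by omega) (by rwa [hv])

theorem Coloring.card_bipartiteAbove_distLayer (c : G.Coloring Bool) (hG : G.Connected)
    {r u : V} {k : ℕ} (hk : 1 ≤ k) (hu : u ∈ G.distLayer r k)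
    (hg : ((2 * k : ℕ) : ℕ∞) < G.egirth) :
    ((G.distLayer r (k + 1)).bipartiteAbove G.Adj u).card = G.degree u - 1 := by
  classical
  rw [mem_distLayer] at hu
  have hsplit : G.neighborFinset u = (G.distLayer r (k + 1)).bipartiteAbove G.Adj u ∪
      (G.distLayer r (k - 1)).bipartiteBelow G.Adj u := by
    ext w
    simp only [mem_neighborFinset, Finset.mem_union, Finset.mem_bipartiteAbove,
      Finset.mem_bipartiteBelow, mem_distLayer]
    constructor
    · intro h
      rcases c.dist_eq_succ_or_of_adj hG (r := r) h with h' | h'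
      · exact .inl ⟨by omega, h⟩
      · exact .inr ⟨by omega, h.symm⟩
    · rintro (⟨-, h⟩ | ⟨-, h⟩)
      exacts [h, h.symm]
  have hdisj : Disjoint ((G.distLayer r (k + 1)).bipartiteAbove G.Adj u)
      ((G.distLayer r (k - 1)).bipartiteBelow G.Adj u) := by
    rw [Finset.disjoint_left]
    intro w h₁ h₂
    simp only [Finset.mem_bipartiteAbove, Finset.mem_bipartiteBelow, mem_distLayer] at h₁ h₂
    omega
  have hback := hG.card_bipartiteBelow_distLayer (r := r) (k := k - 1) (v := u)
    (by rw [mem_distLayer]; omega) (by rwa [Nat.sub_add_cancel hk])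
  rw [← card_neighborFinset_eq_degree, hsplit, Finset.card_union_of_disjoint hdisj, hback]
  simp

theorem Coloring.bipartiteBelow_distLayer_of_forall_dist_le (c : G.Coloring Bool)
    (hG : G.Connected) {r v : V} {k : ℕ} (hdiam : ∀ w, G.dist r w ≤ k + 1)
    (hv : v ∈ G.distLayer r (k + 1)) :
    (G.distLayer r k).bipartiteBelow G.Adj v = G.neighborFinset v := by
  rw [mem_distLayer] at hv
  ext u
  simp only [Finset.mem_bipartiteBelow, mem_distLayer, mem_neighborFinset]
  refine ⟨fun h => h.2.symm, fun h => ⟨?_, h.symm⟩⟩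
  have := hdiam u
  rcases c.dist_eq_succ_or_of_adj hG (r := r) h with h' | h' <;> omega

theorem Coloring.card_distLayer_mul (c : G.Coloring Bool) (hG : G.Connected) {r : V}
    {k m n : ℕ} (hk : 1 ≤ k) (hg : ((2 * k : ℕ) : ℕ∞) < G.egirth)
    (hm : ∀ u ∈ G.distLayer r k, G.degree u = m + 1)
    (hn : ∀ v ∈ G.distLayer r (k + 1), ((G.distLayer r k).bipartiteBelow G.Adj v).card = n) :
    (G.distLayer r k).card * m = (G.distLayer r (k + 1)).card * n :=
  Finset.card_mul_eq_card_mul G.Adj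
    (fun u hu => by rw [c.card_bipartiteAbove_distLayer hG hk hu hg, hm u hu, Nat.add_sub_cancel])
    hn

end Layers

theorem Coloring.card_filter_eq_sum_distLayer [Fintype V] (c : G.Coloring Bool)
    (hG : G.Connected) {r : V} {D : ℕ} (hdiam : ∀ v, G.dist r v ≤ D) :
    (Finset.univ.filter fun v => c v = c r).card =
      ∑ k ∈ (Finset.range (D + 1)).filter Even, (G.distLayer r k).card := by
  have heven (v : V) : Even (G.dist r v) ↔ c v = c r := by
    rw [c.even_dist_iff (hG r v)]
    cases c v <;> cases c r <;> simp
  rw [Finset.card_eq_sum_card_fiberwise (f := G.dist r)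
    (t := (Finset.range (D + 1)).filter Even)]
  · refine Finset.sum_congr rfl fun k hk => congrArg Finset.card ?_
    ext v
    simp only [Finset.mem_filter, Finset.mem_univ, true_and, mem_distLayer]
    refine ⟨And.right, fun hv => ⟨(heven v).mp (hv ▸ (Finset.mem_filter.mp hk).2), hv⟩⟩
  · intro v hv
    simp only [Finset.coe_filter, Finset.mem_univ, true_and, Set.mem_ofPred_eq,
      Finset.mem_range] at hv ⊢
    exact ⟨Nat.lt_succ_of_le (hdiam v), (heven v).mpr hv⟩

end SimpleGraph

section IncidenceGeometry

variable {P L : Type*} {I : P → L → Prop}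

def incidenceColoring (I : P → L → Prop) : (incidenceGraph I).Coloring Bool :=
  Coloring.mk Sum.isLeft fun {v w} h => by
    cases v <;> cases w <;> simp_all [incidenceGraph, IncAdj]

@[simp]
theorem incidenceColoring_apply (v : P ⊕ L) : incidenceColoring I v = v.isLeft := rfl

theorem degree_incidenceGraph_inl [Fintype P] [Fintype L] [DecidableRel (incidenceGraph I).Adj]
    (p : P) : (incidenceGraph I).degree (Sum.inl p) = {l | I p l}.ncard := by
  have : (incidenceGraph I).neighborSet (Sum.inl p) = Sum.inr '' {l | I p l} := by
    ext v
    cases v <;> simp [incidenceGraph, IncAdj]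
  rw [← card_neighborSet_eq_degree, ← Nat.card_eq_fintype_card, Nat.card_coe_set_eq, this,
    Set.ncard_image_of_injective _ Sum.inr_injective]

theorem degree_incidenceGraph_inr [Fintype P] [Fintype L] [DecidableRel (incidenceGraph I).Adj]
    (l : L) : (incidenceGraph I).degree (Sum.inr l) = {p | I p l}.ncard := by
  have : (incidenceGraph I).neighborSet (Sum.inr l) = Sum.inl '' {p | I p l} := by
    ext v
    cases v <;> simp [incidenceGraph, IncAdj]
  rw [← card_neighborSet_eq_degree, ← Nat.card_eq_fintype_card, Nat.card_coe_set_eq, this,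
    Set.ncard_image_of_injective _ Sum.inl_injective]

namespace IsGenPolygon

variable {n s t : ℕ}

theorem connected (hI : IsGenPolygon I n s t) : (incidenceGraph I).Connected := by
  obtain ⟨p⟩ := hI.pts_nonempty
  have : Nonempty (P ⊕ L) := ⟨Sum.inl p⟩
  exact connected_of_ediam_ne_top (by simp [hI.ediam_eq])

theorem dist_le (hI : IsGenPolygon I n s t) (v w : P ⊕ L) : (incidenceGraph I).dist v w ≤ n := by
  have h := dist_le_diam (G := incidenceGraph I) (u := v) (v := w) (by simp [hI.ediam_eq])
  simpa [diam, hI.ediam_eq] using h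

theorem two_mul_lt_egirth (hI : IsGenPolygon I n s t) {k : ℕ} (hk : k < n) :
    ((2 * k : ℕ) : ℕ∞) < (incidenceGraph I).egirth := by
  rw [hI.egirth_eq]
  exact_mod_cast (by omega : 2 * k < 2 * n)

variable [Fintype P] [Fintype L]

theorem card_eq_sum_card_distLayer (hI : IsGenPolygon I n s t) (p : P) :
    Fintype.card P =
      ∑ k ∈ (Finset.range (n + 1)).filter Even,
        ((incidenceGraph I).distLayer (Sum.inl p) k).card := by
  rw [← (incidenceColoring I).card_filter_eq_sum_distLayer hI.connected (hI.dist_le _)]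
  have : (Finset.univ.filter fun v => incidenceColoring I v = incidenceColoring I (Sum.inl p)) =
      Finset.univ.map Function.Embedding.inl := by
    ext v
    rw [Finset.mem_filter]
    cases v <;> simp
  rw [this, Finset.card_map, Finset.card_univ]

variable [DecidableRel (incidenceGraph I).Adj]

theorem degree_of_mem_distLayer (hI : IsGenPolygon I n s t) {p : P} {k : ℕ} {v : P ⊕ L}
    (hv : v ∈ (incidenceGraph I).distLayer (Sum.inl p) k) :
    (incidenceGraph I).degree v = (if Even k then t else s) + 1 := by
  rw [mem_distLayer] at hv
  have hpar := (incidenceColoring I).even_dist_iff (hI.connected (Sum.inl p) v)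
  rw [hv] at hpar
  cases v with
  | inl q =>
    simp only [incidenceColoring_apply, Sum.isLeft_inl, iff_true] at hpar
    simp [degree_incidenceGraph_inl, hI.point_card, hpar]
  | inr l =>
    simp only [incidenceColoring_apply, Sum.isLeft_inl, Sum.isLeft_inr] at hpar
    simp [degree_incidenceGraph_inr, hI.line_card, hpar]

theorem card_distLayer_one (hI : IsGenPolygon I n s t) (p : P) :
    ((incidenceGraph I).distLayer (Sum.inl p) 1).card = t + 1 := by
  rw [distLayer_one, card_neighborFinset_eq_degree, degree_incidenceGraph_inl, hI.point_card]

theorem card_distLayer_succ (hI : IsGenPolygon I n s t) (p : P) {k : ℕ} (hk : 1 ≤ k)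
    (hkn : k + 1 < n) :
    ((incidenceGraph I).distLayer (Sum.inl p) (k + 1)).card =
      ((incidenceGraph I).distLayer (Sum.inl p) k).card * (if Even k then t else s) := by
  have := (incidenceColoring I).card_distLayer_mul hI.connected (r := Sum.inl p) hk
    (hI.two_mul_lt_egirth (by omega)) (fun u hu => hI.degree_of_mem_distLayer hu)
    (fun v hv => hI.connected.card_bipartiteBelow_distLayer hv (hI.two_mul_lt_egirth hkn))
  rw [this, mul_one]

theorem card_distLayer_last {k : ℕ} (hI : IsGenPolygon I (k + 1) s t) (p : P) (hk : 1 ≤ k) :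
    ((incidenceGraph I).distLayer (Sum.inl p) (k + 1)).card *
        ((if Even (k + 1) then t else s) + 1) =
      ((incidenceGraph I).distLayer (Sum.inl p) k).card * (if Even k then t else s) := by
  refine ((incidenceColoring I).card_distLayer_mul hI.connected (r := Sum.inl p) hk
    (hI.two_mul_lt_egirth (by omega)) (fun u hu => hI.degree_of_mem_distLayer hu)
    fun v hv => ?_).symm
  rw [(incidenceColoring I).bipartiteBelow_distLayer_of_forall_dist_le hI.connected
    (hI.dist_le _) hv, card_neighborFinset_eq_degree, hI.degree_of_mem_distLayer hv]

end IsGenPolygon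

end IncidenceGeometry

theorem generalized_hexagon_card_points_general {P L : Type*} [Fintype P] [Fintype L]
    {I : P → L → Prop} {s t : ℕ} (hhex : IsGenPolygon I 6 s t) :
    Fintype.card P = (1 + s) * (1 + s * t + s ^ 2 * t ^ 2) := by
  classical
  obtain ⟨p⟩ := hhex.pts_nonempty
  set N : ℕ → ℕ := fun k => ((incidenceGraph I).distLayer (Sum.inl p) k).card with hN
  have h0 : N 0 = 1 := by simp [hN, hhex.connected.distLayer_zero]
  have h1 : N 1 = t + 1 := hhex.card_distLayer_one p
  have h2 : N 2 = N 1 * s := hhex.card_distLayer_succ p (k := 1) le_rfl (by norm_num)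
  have h3 : N 3 = N 2 * t := hhex.card_distLayer_succ p (k := 2) (by norm_num) (by norm_num)
  have h4 : N 4 = N 3 * s := hhex.card_distLayer_succ p (k := 3) (by norm_num) (by norm_num)
  have h5 : N 5 = N 4 * t := hhex.card_distLayer_succ p (k := 4) (by norm_num) (by norm_num)
  have h6 : N 6 * (t + 1) = N 5 * s := hhex.card_distLayer_last p (k := 5) (by norm_num)
  have h6' : N 6 = s ^ 3 * t ^ 2 := by
    refine Nat.eq_of_mul_eq_mul_right (by positivity : 0 < t + 1) (h6.trans ?_)
    rw [h5, h4, h3, h2, h1]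
    ring
  rw [hhex.card_eq_sum_card_distLayer p, show (Finset.range 7).filter Even = {0, 2, 4, 6} by decide]
  simp only [Finset.mem_insert, OfNat.zero_ne_ofNat, Finset.mem_singleton, or_self,
    not_false_eq_true, Finset.sum_insert, Nat.reduceEqDiff, Finset.sum_singleton]
  show N 0 + (N 2 + (N 4 + N 6)) = _
  rw [h0, h6', h4, h3, h2, h1]
  ring

/-- A finite generalized hexagon of order `(s, t)` has exactly `(1 + s)(1 + st + s²t²)`
points. -/
theorem generalized_hexagon_card_points {P L : Type*} [Fintype P] [Fintype L]
    {I : P → L → Prop} {s t : ℕ} (hs : 1 ≤ s) (ht : 1 ≤ t)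
    (hhex : IsGenPolygon I 6 s t) :
    Fintype.card P = (1 + s) * (1 + s * t + s ^ 2 * t ^ 2) :=
  generalized_hexagon_card_points_general hhex
end

section
/- There exists a partial distance-2 ovoid of size 19 in the dual split Cayley hexagon H(2)^D; that is, there is a set O of 19 points of H(2)^D such that no line of H(2)^D is incident with two distinct elements of O. -/
open SimpleGraph
section DualSplitCayley

variable (F : Type*) [Field F]

/-- The quadratic form `Q(x) = x₀x₄ + x₁x₅ + x₂x₆ − x₃²` on `F^7`. -/
def hexQF (x : Fin 7 → F) : F := x 0 * x 4 + x 1 * x 5 + x 2 * x 6 - x 3 ^ 2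

/-- Grassmann coordinate `p_{ij} = x_i y_j − x_j y_i`. -/
def grassCoord (x y : Fin 7 → F) (i j : Fin 7) : F := x i * y j - x j * y i

/-- Lines of the dual split Cayley hexagon `H(q)^D`: 1-dimensional subspaces of `F^7`
on which `Q` vanishes. -/
def IsHexLine (U : Submodule F (Fin 7 → F)) : Prop :=
  Module.finrank F U = 1 ∧ ∀ x ∈ U, hexQF F x = 0

/-- Points of the dual split Cayley hexagon `H(q)^D`: 2-dimensional subspaces of `F^7`
on which `Q` vanishes and whose Grassmann coordinates satisfy the six linear conditions. -/
def IsHexPoint (W : Submodule F (Fin 7 → F)) : Prop :=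
  Module.finrank F W = 2 ∧ (∀ x ∈ W, hexQF F x = 0) ∧
  ∀ x ∈ W, ∀ y ∈ W,
    grassCoord F x y 1 2 = grassCoord F x y 3 4 ∧
    grassCoord F x y 5 4 = grassCoord F x y 3 2 ∧
    grassCoord F x y 2 0 = grassCoord F x y 3 5 ∧
    grassCoord F x y 6 5 = grassCoord F x y 3 0 ∧
    grassCoord F x y 0 1 = grassCoord F x y 3 6 ∧
    grassCoord F x y 4 6 = grassCoord F x y 3 1

end DualSplitCayley


/-!
Over `𝔽₂` a point `⟨x, y⟩` of `H(2)^D` consists of the three nonzero vectors `x`, `y`, `x + y`,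
and a line on the point is spanned by one of them. So a set of points is a partial distance-2
ovoid as soon as these triples are pairwise disjoint, and 19 points with this property are given
explicitly. That a span `⟨x, y⟩` is a point only has to be
checked on `x`, `y` and `x + y`: a quadratic form vanishing there vanishes on the span, and
Grassmann coordinates of two vectors of the span are multiples of those of `(x, y)`.
-/

open Function

section HexPoint

variable {F : Type*} [Field F]

def HexGrassmannConditions (x y : Fin 7 → F) : Prop :=
  grassCoord F x y 1 2 = grassCoord F x y 3 4 ∧
  grassCoord F x y 5 4 = grassCoord F x y 3 2 ∧
  grassCoord F x y 2 0 = grassCoord F x y 3 5 ∧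
  grassCoord F x y 6 5 = grassCoord F x y 3 0 ∧
  grassCoord F x y 0 1 = grassCoord F x y 3 6 ∧
  grassCoord F x y 4 6 = grassCoord F x y 3 1

lemma grassCoord_smul_add_smul (x y : Fin 7 → F) (a b c d : F) (i j : Fin 7) :
    grassCoord F (a • x + b • y) (c • x + d • y) i j = (a * d - b * c) * grassCoord F x y i j := by
  simp only [grassCoord, Pi.add_apply, Pi.smul_apply, smul_eq_mul]
  ring

lemma HexGrassmannConditions.smul_add_smul {x y : Fin 7 → F} (h : HexGrassmannConditions x y)
    (a b c d : F) : HexGrassmannConditions (a • x + b • y) (c • x + d • y) := by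
  obtain ⟨h₁, h₂, h₃, h₄, h₅, h₆⟩ := h
  simp only [HexGrassmannConditions, grassCoord_smul_add_smul, h₁, h₂, h₃, h₄, h₅, h₆, and_self]

lemma hexQF_smul_add_smul (x y : Fin 7 → F) (a b : F) :
    hexQF F (a • x + b • y) = a ^ 2 * hexQF F x + b ^ 2 * hexQF F y +
      a * b * (hexQF F (x + y) - hexQF F x - hexQF F y) := by
  simp only [hexQF, Pi.add_apply, Pi.smul_apply, smul_eq_mul]
  ring

theorem isHexPoint_span_pair {x y : Fin 7 → F} (hxy : LinearIndependent F ![x, y])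
    (hx : hexQF F x = 0) (hy : hexQF F y = 0) (hsum : hexQF F (x + y) = 0)
    (hg : HexGrassmannConditions x y) : IsHexPoint F (Submodule.span F {x, y}) := by
  refine ⟨?_, ?_, ?_⟩
  · have := finrank_span_eq_card hxy
    rwa [Matrix.range_cons_cons_empty, Fintype.card_fin] at this
  · intro v hv
    obtain ⟨a, b, rfl⟩ := Submodule.mem_span_pair.1 hv
    simp [hexQF_smul_add_smul, hx, hy, hsum]
  · intro u hu v hv
    obtain ⟨a, b, rfl⟩ := Submodule.mem_span_pair.1 hu
    obtain ⟨c, d, rfl⟩ := Submodule.mem_span_pair.1 hv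
    exact hg.smul_add_smul a b c d

lemma IsHexPoint.ne_bot {W : Submodule F (Fin 7 → F)} (hW : IsHexPoint F W) : W ≠ ⊥ := by
  rintro rfl
  simpa using hW.1

lemma IsHexLine.ne_bot {U : Submodule F (Fin 7 → F)} (hU : IsHexLine F U) : U ≠ ⊥ := by
  rintro rfl
  simpa using hU.1

lemma eq_of_isHexLine_le_of_disjoint {ι : Type*} {W : ι → Submodule F (Fin 7 → F)}
    (hW : Pairwise (Disjoint on W)) {U : Submodule F (Fin 7 → F)} (hU : IsHexLine F U)
    {i j : ι} (hi : U ≤ W i) (hj : U ≤ W j) : i = j := by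
  by_contra hij
  exact hU.ne_bot (le_bot_iff.1 (hW hij hi hj))

lemma injective_of_isHexPoint_of_disjoint {ι : Type*} {W : ι → Submodule F (Fin 7 → F)}
    (hpt : ∀ i, IsHexPoint F (W i)) (hW : Pairwise (Disjoint on W)) : Injective W := by
  intro i j hij
  by_contra hne
  have hii : Disjoint (W i) (W j) := hW hne
  rw [← hij, disjoint_self] at hii
  exact (hpt i).ne_bot hii

end HexPoint

section ZModTwo

variable {V : Type*} [AddCommGroup V] [Module (ZMod 2) V]

lemma zmod_two_eq_zero_or_one (a : ZMod 2) : a = 0 ∨ a = 1 := by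
  revert a; decide

lemma mem_span_pair_zmod_two {x y v : V} :
    v ∈ Submodule.span (ZMod 2) {x, y} ↔ v = 0 ∨ v = x ∨ v = y ∨ v = x + y := by
  rw [Submodule.mem_span_pair]
  constructor
  · rintro ⟨a, b, rfl⟩
    rcases zmod_two_eq_zero_or_one a with rfl | rfl <;>
      rcases zmod_two_eq_zero_or_one b with rfl | rfl <;> simp
  · rintro (rfl | rfl | rfl | rfl)
    exacts [⟨0, 0, by simp⟩, ⟨1, 0, by simp⟩, ⟨0, 1, by simp⟩, ⟨1, 1, by simp⟩]

lemma linearIndependent_pair_zmod_two {x y : V} (hx : x ≠ 0) (hy : y ≠ 0) (hxy : x ≠ y) :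
    LinearIndependent (ZMod 2) ![x, y] := by
  refine (LinearIndependent.pair_iff' hx).2 fun a ↦ ?_
  rcases zmod_two_eq_zero_or_one a with rfl | rfl
  · simpa using hy.symm
  · simpa using hxy

lemma disjoint_span_pair_zmod_two [DecidableEq V] {x y x' y' : V}
    (h : Disjoint ({x, y, x + y} : Finset V) {x', y', x' + y'}) :
    Disjoint (Submodule.span (ZMod 2) {x, y}) (Submodule.span (ZMod 2) {x', y'}) := by
  rw [Submodule.disjoint_def]
  intro v hv hv'
  by_contra hv0
  rw [mem_span_pair_zmod_two] at hv hv'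
  refine Finset.disjoint_iff_ne.1 h v ?_ v ?_ rfl <;>
    simp only [Finset.mem_insert, Finset.mem_singleton] <;> tauto

end ZModTwo

section Ovoid

def ovoidGenX : Fin 19 → Fin 7 → ZMod 2 :=
  ![![0, 0, 1, 1, 0, 0, 1], ![0, 0, 0, 0, 0, 1, 0], ![0, 0, 0, 0, 0, 0, 1], ![0, 0, 0, 0, 1, 1, 0],
    ![0, 1, 1, 1, 0, 1, 0], ![0, 1, 0, 1, 1, 1, 1], ![0, 0, 1, 1, 1, 1, 1], ![0, 0, 1, 0, 1, 0, 0],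
    ![0, 0, 0, 0, 1, 0, 0], ![0, 0, 1, 0, 1, 1, 0], ![0, 0, 0, 0, 1, 1, 1], ![0, 1, 1, 0, 0, 1, 1],
    ![0, 0, 1, 1, 1, 0, 1], ![0, 0, 0, 0, 1, 0, 1], ![0, 0, 0, 0, 0, 1, 1], ![0, 1, 1, 0, 1, 1, 1],
    ![0, 1, 0, 1, 0, 1, 1], ![0, 1, 0, 1, 1, 1, 0], ![0, 0, 1, 1, 0, 1, 1]]

def ovoidGenY : Fin 19 → Fin 7 → ZMod 2 :=
  ![![0, 1, 0, 0, 1, 0, 0], ![0, 0, 1, 0, 0, 0, 0], ![0, 1, 0, 0, 0, 0, 0], ![1, 1, 1, 0, 0, 0, 0],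
    ![1, 0, 1, 0, 1, 1, 1], ![1, 0, 0, 1, 1, 1, 0], ![1, 1, 0, 0, 1, 1, 0], ![0, 1, 0, 1, 0, 1, 0],
    ![0, 1, 1, 0, 0, 0, 0], ![1, 1, 0, 1, 1, 0, 0], ![1, 1, 0, 0, 0, 0, 0], ![1, 0, 0, 1, 1, 0, 0],
    ![1, 0, 0, 1, 1, 1, 1], ![1, 0, 1, 0, 0, 0, 0], ![1, 0, 0, 0, 0, 0, 0], ![1, 0, 1, 1, 1, 0, 0],
    ![1, 0, 0, 0, 0, 0, 1], ![1, 0, 1, 1, 0, 1, 1], ![1, 0, 0, 0, 0, 1, 0]]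

def ovoidPoint (i : Fin 19) : Submodule (ZMod 2) (Fin 7 → ZMod 2) :=
  Submodule.span (ZMod 2) {ovoidGenX i, ovoidGenY i}

lemma ovoidGen_ne : ∀ i, ovoidGenX i ≠ 0 ∧ ovoidGenY i ≠ 0 ∧ ovoidGenX i ≠ ovoidGenY i := by
  decide

lemma hexQF_ovoidGen : ∀ i, hexQF (ZMod 2) (ovoidGenX i) = 0 ∧ hexQF (ZMod 2) (ovoidGenY i) = 0 ∧
    hexQF (ZMod 2) (ovoidGenX i + ovoidGenY i) = 0 := by
  decide

lemma hexGrassmannConditions_ovoidGen :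
    ∀ i, HexGrassmannConditions (ovoidGenX i) (ovoidGenY i) := by
  unfold HexGrassmannConditions
  decide

lemma disjoint_ovoidGen_triples : Pairwise fun i j ↦
    Disjoint ({ovoidGenX i, ovoidGenY i, ovoidGenX i + ovoidGenY i} : Finset (Fin 7 → ZMod 2))
      {ovoidGenX j, ovoidGenY j, ovoidGenX j + ovoidGenY j} := by
  unfold Pairwise
  decide

lemma isHexPoint_ovoidPoint (i : Fin 19) : IsHexPoint (ZMod 2) (ovoidPoint i) :=
  have ⟨hx, hy, hxy⟩ := ovoidGen_ne i
  have ⟨qx, qy, qxy⟩ := hexQF_ovoidGen i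
  isHexPoint_span_pair (linearIndependent_pair_zmod_two hx hy hxy) qx qy qxy
    (hexGrassmannConditions_ovoidGen i)

lemma pairwise_disjoint_ovoidPoint : Pairwise (Disjoint on ovoidPoint) :=
  fun _ _ hij ↦ disjoint_span_pair_zmod_two (disjoint_ovoidGen_triples hij)

end Ovoid

/-- There exists a partial distance-2 ovoid of size `19` in the dual split Cayley
hexagon `H(2)^D`. -/
theorem exists_partial_ovoid_H2D_of_size_19 :
    ∃ O : Set {W : Submodule (ZMod 2) (Fin 7 → ZMod 2) // IsHexPoint (ZMod 2) W},
      O.ncard = 19 ∧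
      ∀ l : {U : Submodule (ZMod 2) (Fin 7 → ZMod 2) // IsHexLine (ZMod 2) U},
        ∀ p ∈ O, ∀ p' ∈ O,
          (l : Submodule (ZMod 2) (Fin 7 → ZMod 2)) ≤ (p : Submodule (ZMod 2) (Fin 7 → ZMod 2)) →
          (l : Submodule (ZMod 2) (Fin 7 → ZMod 2)) ≤ (p' : Submodule (ZMod 2) (Fin 7 → ZMod 2)) →
          p = p' := by
  have hinj : Function.Injective ovoidPoint :=
    injective_of_isHexPoint_of_disjoint isHexPoint_ovoidPoint pairwise_disjoint_ovoidPoint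
  refine ⟨Set.range fun i ↦ ⟨ovoidPoint i, isHexPoint_ovoidPoint i⟩, ?_, ?_⟩
  · rw [Set.ncard_range_of_injective fun i j h ↦ hinj (congrArg Subtype.val h)]
    simp
  · rintro ⟨U, hU⟩ _ ⟨i, rfl⟩ _ ⟨j, rfl⟩ hi hj
    rw [eq_of_isHexLine_le_of_disjoint pairwise_disjoint_ovoidPoint hU hi hj]
end
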